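/- arXiv:1505.06094 — 5 statements merged into one kernel-verified Lean document; each statement's English description precedes it below -/
import Mathlib

section
/- Let w be a word of length n over an alphabet, having periods γ and ρ with ρ ≤ γ ≤ n. If n ≥ γ + ρ − gcd(γ,ρ), then w has period gcd(γ,ρ). -/
/-!
Euclid's algorithm on periods. If `q < p` are periods of a word of length `n`, its prefix of
length `n - q` has periods `p - q` and `q`, which have the same gcd `g` and satisfy the same
length bound; by induction that prefix has period `g`. The prefix is at least `q` long and `g`
divides `q`, so period `q` carries period `g` over to the whole word.
-/

/-- A word `w` of length `n` (with letters `w 0, w 1, ..., w (n-1)` in an alphabet `S`)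
has period `p` if `w i = w (i + p)` whenever both positions lie in the word. -/
def HasPeriod {S : Type*} (w : ℕ → S) (n p : ℕ) : Prop :=
  ∀ i, i + p < n → w i = w (i + p)

namespace HasPeriod

variable {S : Type*} {w : ℕ → S} {n m p q : ℕ}

theorem mono (h : HasPeriod w n p) (hmn : m ≤ n) : HasPeriod w m p :=
  fun i hi => h i (hi.trans_le hmn)

theorem eq_add_mul (h : HasPeriod w n p) (i : ℕ) :
    ∀ k, i + p * k < n → w i = w (i + p * k)
  | 0, _ => rfl
  | k + 1, hk => by
    rw [h.eq_add_mul i k (by nlinarith), h (i + p * k) (by nlinarith), mul_add_one, add_assoc]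

theorem eq_of_modEq (h : HasPeriod w n p) {i j : ℕ} (hi : i < n) (hj : j < n)
    (hij : i ≡ j [MOD p]) : w i = w j := by
  wlog hle : i ≤ j generalizing i j
  · exact (this hj hi hij.symm (by omega)).symm
  obtain ⟨k, hk⟩ := (Nat.modEq_iff_dvd' hle).mp hij
  have hj' : j = i + p * k := by omega
  subst hj'
  exact h.eq_add_mul i k hj

theorem sub (hp : HasPeriod w n p) (hq : HasPeriod w n q) (hqp : q ≤ p) :
    HasPeriod w (n - q) (p - q) := by
  intro i hi
  rw [hp i (by omega), hq (i + (p - q)) (by omega)]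
  congr 1
  omega

theorem of_prefix_of_dvd (hp : HasPeriod w n p) (hq : HasPeriod w m q) (hqp : q ∣ p)
    (hp0 : 0 < p) (hpm : p ≤ m) : HasPeriod w n q := by
  intro i hi
  have hmod : i % p ≡ (i + q) % p [MOD q] :=
    ((Nat.mod_modEq i p).of_dvd hqp).trans
      ((Nat.add_modEq_right.symm).trans ((Nat.mod_modEq (i + q) p).of_dvd hqp).symm)
  have hin : i < n := by omega
  calc w i = w (i % p) :=
        hp.eq_of_modEq hin ((Nat.mod_le i p).trans_lt hin) (Nat.mod_modEq i p).symm
    _ = w ((i + q) % p) :=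
        hq.eq_of_modEq ((Nat.mod_lt i hp0).trans_le hpm) ((Nat.mod_lt _ hp0).trans_le hpm) hmod
    _ = w (i + q) := hp.eq_of_modEq ((Nat.mod_le _ p).trans_lt hi) hi (Nat.mod_modEq _ p)

theorem gcd (hp : HasPeriod w n p) (hq : HasPeriod w n q) (hlen : p + q - Nat.gcd p q ≤ n) :
    HasPeriod w n (Nat.gcd p q) := by
  induction hs : p + q using Nat.strong_induction_on generalizing n p q with
  | _ s ih =>
  wlog hqp : q ≤ p generalizing p q
  · rw [Nat.gcd_comm] at hlen ⊢
    exact this hq hp (by omega) (by omega) (by omega)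
  rcases Nat.eq_zero_or_pos q with rfl | hq0
  · simpa using hp
  rcases hqp.eq_or_lt with rfl | hlt
  · simpa using hp
  have hg : Nat.gcd (p - q) q = Nat.gcd p q := Nat.gcd_sub_self_left hqp
  have hgle : Nat.gcd p q ≤ p - q := Nat.le_of_dvd (by omega) (hg ▸ Nat.gcd_dvd_left _ _)
  have hprefix : HasPeriod w (n - q) (Nat.gcd p q) :=
    hg ▸ ih p (by omega) (hp.sub hq hqp) (hq.mono (Nat.sub_le n q)) (by omega)
      (Nat.sub_add_cancel hqp)
  exact hq.of_prefix_of_dvd hprefix (Nat.gcd_dvd_right p q) hq0 (by omega)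

end HasPeriod

theorem hasPeriod_gcd_of_hasPeriod_of_hasPeriod_general {S : Type*} (w : ℕ → S) (n γ ρ : ℕ)
    (hwγ : HasPeriod w n γ) (hwρ : HasPeriod w n ρ)
    (hlen : γ + ρ - Nat.gcd γ ρ ≤ n) :
    HasPeriod w n (Nat.gcd γ ρ) :=
  hwγ.gcd hwρ hlen

/-- **Fine–Wilf theorem**: if a word of length `n` has periods `ρ ≤ γ ≤ n` and
`n ≥ γ + ρ - gcd(γ, ρ)`, then it has period `gcd(γ, ρ)`. -/
theorem hasPeriod_gcd_of_hasPeriod_of_hasPeriod {S : Type*} (w : ℕ → S) (n γ ρ : ℕ)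
    (hρ : 1 ≤ ρ) (hργ : ρ ≤ γ) (hγn : γ ≤ n)
    (hwγ : HasPeriod w n γ) (hwρ : HasPeriod w n ρ)
    (hlen : γ + ρ - Nat.gcd γ ρ ≤ n) :
    HasPeriod w n (Nat.gcd γ ρ) :=
  hasPeriod_gcd_of_hasPeriod_of_hasPeriod_general w n γ ρ hwγ hwρ hlen
end

section
/- Let w be a word over an alphabet, let w₁ be an initial segment of w having period γ, and let w₂ be a terminal segment of w having period ρ. If, as occurrences inside w, the segments w₁ and w₂ intersect in a segment u with ℓ(u) ≥ γ + ρ − gcd(γ,ρ), then w has period gcd(γ,ρ). -/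
/-!
Fine and Wilf's periodicity lemma, applied to the overlap `[i, j)` of the two segments, shows
that the overlap has period `g = gcd γ ρ`. Since the overlap is at least `γ` long and `g ∣ γ`,
every position of the initial segment is congruent mod `γ` to one in the overlap, so the initial
segment has period `g` as well; symmetrically for the terminal segment. Two segments with
period `g` that overlap in at least `g` positions make their union `g`-periodic.
-/

/-- The segment of the word `w` occupying positions `lo, lo+1, ..., hi-1` has period `p`:
`w i = w (i + p)` whenever both positions lie in the segment. -/
def HasPeriodOn {S : Type*} (w : ℕ → S) (lo hi p : ℕ) : Prop :=
  ∀ i, lo ≤ i → i + p < hi → w i = w (i + p)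

theorem Nat.exists_modEq_mem_Ico (s x : ℕ) {p : ℕ} (hp : 0 < p) :
    ∃ r ∈ Set.Ico s (s + p), r ≡ x [MOD p] := by
  -- The witness is `s + (x - s) % p`; adding `p * s` keeps the subtraction from truncating.
  have hs : s ≤ p * s := Nat.le_mul_of_pos_left s hp
  have hlt := Nat.mod_lt (x + p * s - s) hp
  refine ⟨s + (x + p * s - s) % p, ⟨le_self_add, by omega⟩, ?_⟩
  calc s + (x + p * s - s) % p ≡ s + (x + p * s - s) [MOD p] := (Nat.mod_modEq _ p).add_left s
    _ = x + p * s := by omega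
    _ ≡ x [MOD p] := Nat.add_modulus_mul_modEq_iff.mpr rfl

namespace HasPeriodOn

variable {S : Type*} {w : ℕ → S} {lo hi p : ℕ}

theorem mono (h : HasPeriodOn w lo hi p) {lo' hi' : ℕ} (hlo : lo ≤ lo') (hhi : hi' ≤ hi) :
    HasPeriodOn w lo' hi' p :=
  fun x hx₁ hx₂ => h x (hlo.trans hx₁) (hx₂.trans_le hhi)

theorem eq_add_mul (h : HasPeriodOn w lo hi p) {x : ℕ} (hx : lo ≤ x) :
    ∀ k, x + p * k < hi → w x = w (x + p * k)
  | 0, _ => rfl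
  | k + 1, hk => by
    rw [Nat.mul_succ, ← add_assoc] at hk ⊢
    exact (h.eq_add_mul hx k (by omega)).trans (h _ (by omega) hk)

theorem eq_of_modEq (h : HasPeriodOn w lo hi p) {x y : ℕ} (hx : lo ≤ x) (hy : lo ≤ y)
    (hxh : x < hi) (hyh : y < hi) (hxy : x ≡ y [MOD p]) : w x = w y := by
  wlog hle : x ≤ y generalizing x y
  · exact (this hy hx hyh hxh hxy.symm (by omega)).symm
  obtain ⟨k, hk⟩ := (Nat.modEq_iff_dvd' hle).mp hxy
  rw [show y = x + p * k by omega]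
  exact h.eq_add_mul hx k (by omega)

theorem iff_hasPeriod_map_range' :
    HasPeriodOn w lo hi p ↔ ((List.range' lo (hi - lo)).map w).HasPeriod p := by
  simp only [List.hasPeriod_iff_getElem?, List.length_map, List.length_range',
    List.getElem?_map]
  constructor
  · intro h i hip
    rw [List.getElem?_range' (by omega), List.getElem?_range' (by omega)]
    simpa [← add_assoc] using h _ le_self_add (by omega)
  · intro h i hlo hhi
    have := h (i - lo) (by omega)
    rw [List.getElem?_range' (by omega), List.getElem?_range' (by omega)] at this
    simpa [Nat.add_sub_cancel' hlo, ← add_assoc] using this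

theorem gcd {q : ℕ} (hp : HasPeriodOn w lo hi p) (hq : HasPeriodOn w lo hi q)
    (hlen : p + q - p.gcd q ≤ hi - lo) : HasPeriodOn w lo hi (p.gcd q) := by
  rw [iff_hasPeriod_map_range'] at hp hq ⊢
  exact hp.gcd hq (by simpa using hlen)

theorem extend_of_dvd {s t g : ℕ} (hg : HasPeriodOn w s t g) (hp : HasPeriodOn w lo hi p)
    (hp₀ : 0 < p) (hgp : g ∣ p) (hlo : lo ≤ s) (hst : s + p ≤ t) (hhi : t ≤ hi) :
    HasPeriodOn w lo hi g := by
  intro a ha hag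
  obtain ⟨r, ⟨hsr, hrs⟩, hr⟩ := Nat.exists_modEq_mem_Ico s a hp₀
  obtain ⟨r', ⟨hsr', hrs'⟩, hr'⟩ := Nat.exists_modEq_mem_Ico s (a + g) hp₀
  have hrr' : r ≡ r' [MOD g] :=
    calc r ≡ a [MOD g] := hr.of_dvd hgp
      _ ≡ a + g [MOD g] := (Nat.add_modEq_right).symm
      _ ≡ r' [MOD g] := (hr'.of_dvd hgp).symm
  calc w a = w r := hp.eq_of_modEq ha (by omega) (by omega) (by omega) hr.symm
    _ = w r' := hg.eq_of_modEq hsr hsr' (by omega) (by omega) hrr'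
    _ = w (a + g) := hp.eq_of_modEq (by omega) (by omega) (by omega) hag hr'

theorem union {i j : ℕ} (h₁ : HasPeriodOn w lo j p) (h₂ : HasPeriodOn w i hi p)
    (hij : i + p ≤ j) : HasPeriodOn w lo hi p := by
  intro a ha hap
  by_cases haj : a + p < j
  · exact h₁ a ha haj
  · exact h₂ a (by omega) hap

end HasPeriodOn

theorem hasPeriodOn_gcd_of_initial_of_terminal_general {S : Type*} (w : ℕ → S) (n i j γ ρ : ℕ)
    (hjn : j ≤ n)
    (hγ : 1 ≤ γ)
    (hρ : 1 ≤ ρ)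
    (hper₁ : HasPeriodOn w 0 j γ)
    (hper₂ : HasPeriodOn w i n ρ)
    (hu : γ + ρ - Nat.gcd γ ρ ≤ j - i) :
    HasPeriodOn w 0 n (Nat.gcd γ ρ) := by
  have hgγ : Nat.gcd γ ρ ≤ γ := Nat.gcd_le_left ρ hγ
  have hgρ : Nat.gcd γ ρ ≤ ρ := Nat.gcd_le_right γ hρ
  have hmid : HasPeriodOn w i j (Nat.gcd γ ρ) :=
    (hper₁.mono (Nat.zero_le i) le_rfl).gcd (hper₂.mono le_rfl hjn) hu
  have hleft : HasPeriodOn w 0 j (Nat.gcd γ ρ) :=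
    hmid.extend_of_dvd hper₁ hγ (Nat.gcd_dvd_left γ ρ) (Nat.zero_le i) (by omega) le_rfl
  have hright : HasPeriodOn w i n (Nat.gcd γ ρ) :=
    hmid.extend_of_dvd hper₂ hρ (Nat.gcd_dvd_right γ ρ) le_rfl (by omega) hjn
  exact hleft.union hright (by omega)

/-- Let `w` be a word of length `n` (with letters `w 0, ..., w (n-1)`), let its initial
segment occupying positions `[0, j)` have period `γ`, and let its terminal segment occupying
positions `[i, n)` have period `ρ`.  If the two segments intersect (as occurrences in `w`)
in a segment of length `j - i ≥ γ + ρ - gcd(γ, ρ)`, then `w` has period `gcd(γ, ρ)`. -/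
theorem hasPeriodOn_gcd_of_initial_of_terminal {S : Type*} (w : ℕ → S) (n i j γ ρ : ℕ)
    (hij : i ≤ j) (hjn : j ≤ n)
    (hγ : 1 ≤ γ) (hγj : γ ≤ j)
    (hρ : 1 ≤ ρ) (hρn : ρ ≤ n - i)
    (hper₁ : HasPeriodOn w 0 j γ)
    (hper₂ : HasPeriodOn w i n ρ)
    (hu : γ + ρ - Nat.gcd γ ρ ≤ j - i) :
    HasPeriodOn w 0 n (Nat.gcd γ ρ) :=
  hasPeriodOn_gcd_of_initial_of_terminal_general w n i j γ ρ hjn hγ hρ hper₁ hper₂ hu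
end

section
/- Suppose W is a cyclically reduced word in S* of the form x₁V₁y₁V₁⁻¹ = z₀z₁⋯z_{2k−1}, for some letters x₁, y₁ ∈ S and some word V₁, where ℓ(W) = 2k. Suppose also that for some j with j ≢ 0 (mod k), the cyclic permutation z_jz_{j+1}⋯z_{2k−1}z₀⋯z_{j−1} of W is identically equal to x₂V₂y₂V₂⁻¹ for some letters x₂, y₂ ∈ S and some word V₂. Then one of the following holds: (1) {x₁, y₁} = {x₂, y₂} and W ≡ ∏_{t=1}^{s} x₁^{α(t)} V₃ y₁^{β(t)} V₃⁻¹ for some odd integer s > 1, some word V₃, and some α(t), β(t) ∈ {±1} for each t; (2) y₁ = x₁⁻¹, y₂ = x₂⁻¹, and W ≡ ∏_{t=1}^{s} x₁^{α(t)} V₃ x₂^{β(t)} V₃⁻¹ for some even integer s > 0, some word V₃, and some α(t), β(t) ∈ {±1} for each t. -/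
/-!
Extend `W` to its `2k`-periodic sequence `f : ℤ → S`. The shape `W = x₁V₁y₁V₁⁻¹` says that `f` is
skew-symmetric about `0`: `f (-i) = (f i)⁻¹` unless `k ∣ i`; the shape of the rotation says the
same about `j`. Composing the two reflections gives `f (i + 2j) = f i` for `i` off the multiples
of `g = gcd j k`, so by Bézout `f` is `2g`-periodic off `gℤ`, and `W` splits into `s = k / g ≥ 2`
blocks `f (2tg) V₃ f ((2t+1)g) V₃⁻¹`.

On `gℤ` the two reflections, now about `0` and `a = j / g` with `a` coprime to `s`, generate all
even translations, so they fix each letter up to inversion by the parity of its index. The exact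
values come from rescaling by an odd `a' ≡ a (mod s)`, which moves the second centre to `1`:
between consecutive multiples of `s` the sequence is then constant along steps of `2`, and the
parity of `s` decides whether `f (sg) = y₁` lies in the class of `x₁` or in that of the odd
positions.
-/

namespace FreeMonoidInvolution

variable {S : Type*}

/-- The involute `V⁻¹` of a word `V` over an alphabet with involution `σ`. -/
def invol (σ : S → S) (V : List S) : List S := (V.map σ).reverse

/-- `x^ε` for `ε = ±1`: `x` itself if `ε = 1`, and the involute `σ x` otherwise. -/
def epow (σ : S → S) (x : S) (ε : ℤ) : S := if ε = 1 then x else σ x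

/-- A word `z₀z₁⋯z_{n-1}` is reduced if `z_{i+1} ≠ z_i⁻¹` for all `i`, and cyclically
reduced if moreover `z₀ ≠ z_{n-1}⁻¹`. -/
def CyclicallyReduced (σ : S → S) (W : List S) : Prop :=
  W.Chain' (fun u v => v ≠ σ u) ∧ ∀ x ∈ W.head?, ∀ y ∈ W.getLast?, x ≠ σ y

lemma getElem_invol (σ : S → S) (V : List S) (i : ℕ) (h : i < (invol σ V).length) :
    (invol σ V)[i] = σ (V[V.length - 1 - i]'(by simp [invol] at h; omega)) := by
  simp [invol, List.getElem_reverse]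

/-- `d` is a junk value, read only when `W = []`. -/
def cyclicExt (W : List S) (d : S) (i : ℤ) : S := W.getD (i % W.length).toNat d

lemma cyclicExt_periodic (W : List S) (d : S) :
    Function.Periodic (cyclicExt W d) W.length := by
  intro i
  simp [cyclicExt]

lemma cyclicExt_natCast (W : List S) (d : S) {n : ℕ} (h : n < W.length) :
    cyclicExt W d n = W[n] := by
  have : ((n : ℤ) % W.length).toNat = n := by
    rw [Int.emod_eq_of_lt (by omega) (by omega)]
    simp
  simp [cyclicExt, this, List.getElem?_eq_getElem h]

lemma cyclicExt_rotate (W : List S) (d : S) (j : ℕ) (i : ℤ) :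
    cyclicExt (W.rotate j) d i = cyclicExt W d (i + j) := by
  rcases eq_or_ne W [] with rfl | hW
  · simp [cyclicExt]
  have hpos : 0 < W.length := List.length_pos_iff.mpr hW
  set r := (i % W.length).toNat with hr
  have hri : (r : ℤ) = i % W.length := Int.toNat_of_nonneg (Int.emod_nonneg _ (by omega))
  have hrlt : r < W.length := by
    have := Int.emod_lt_of_pos i (by omega : (0 : ℤ) < W.length)
    omega
  have hmod : ((i + j) % W.length).toNat = (r + j) % W.length := by
    rw [← Int.emod_add_emod, ← hri, ← Int.natCast_add, ← Int.natCast_mod, Int.toNat_natCast]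
  simp only [cyclicExt, List.length_rotate, List.getD_eq_getElem?_getD, ← hr, hmod,
    List.getElem?_rotate hrlt]

lemma map_range_cyclicExt (W : List S) (d : S) :
    (List.range W.length).map (fun n : ℕ => cyclicExt W d n) = W := by
  apply List.ext_getElem (by simp)
  intro n h _
  simp [cyclicExt_natCast W d (by simpa using h)]

/-- For the periodic extension of a word of length `2k`, skew symmetry about `0` with `k` says
exactly that the word has the form `x V y V⁻¹`. -/
def SkewSymmAbout (σ : S → S) (k : ℤ) (f : ℤ → S) (a : ℤ) : Prop :=
  ∀ i, ¬ k ∣ i → f (a - i) = σ (f (a + i))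

lemma skewSymmAbout_zero_of_lt {σ : S → S} (hσ : Function.Involutive σ) {f : ℤ → S} {k : ℕ}
    (hk : 0 < k) (hper : Function.Periodic f (2 * k))
    (h : ∀ r : ℕ, 0 < r → r < k → f (-r) = σ (f r)) : SkewSymmAbout σ k f 0 := by
  intro i hi
  have h2k : (0 : ℤ) < 2 * k := by positivity
  obtain ⟨r, q, hr, rfl⟩ : ∃ (r : ℕ) (q : ℤ), r < 2 * k ∧ i = r + q * (2 * k) := by
    refine ⟨(i % (2 * k)).toNat, i / (2 * k), ?_, ?_⟩
    · have := Int.emod_lt_of_pos i h2k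
      omega
    · rw [Int.toNat_of_nonneg (Int.emod_nonneg _ h2k.ne')]
      exact (Int.emod_add_ediv_mul i _).symm
  have hkr : ¬ (k : ℤ) ∣ r := fun h => hi (dvd_add h ((dvd_mul_left _ 2).mul_left q))
  have hq : Function.Periodic f (q * (2 * k)) := by simpa using hper.int_mul q
  rw [zero_sub, zero_add, neg_add, ← sub_eq_add_neg, hq.sub_eq, hq]
  have hr0 : r ≠ 0 := by rintro rfl; simp at hkr
  have hrk : r ≠ k := by rintro rfl; exact hkr dvd_rfl
  rcases lt_or_gt_of_ne hrk with hlt | hgt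
  · exact h r (by omega) hlt
  · have h' := h (2 * k - r) (by omega) (by omega)
    have e₁ : -(((2 * k - r : ℕ) : ℤ)) = r - 2 * k := by omega
    have e₂ : (((2 * k - r : ℕ) : ℤ)) = -r + 2 * k := by omega
    rw [e₁, hper.sub_eq, e₂, hper] at h'
    rw [h', hσ]

section SkewWord

variable (σ : S → S) (x y : S) (V : List S)

def skewWord : List S := [x] ++ V ++ [y] ++ invol σ V

lemma length_skewWord : (skewWord σ x y V).length = 2 * (V.length + 1) := by
  simp [skewWord, invol]
  omega

lemma getElem_skewWord_two_mul_sub {r : ℕ} (hr : 0 < r) (hrk : r < V.length + 1) :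
    (skewWord σ x y V)[2 * (V.length + 1) - r]'(by rw [length_skewWord]; omega) =
      σ ((skewWord σ x y V)[r]'(by rw [length_skewWord]; omega)) := by
  simp only [skewWord, List.getElem_append, getElem_invol, List.length_append,
    List.length_singleton]
  rw [dif_neg (by omega), dif_pos (by omega), dif_pos (by omega), dif_neg (by omega)]
  congr 2
  omega

lemma cyclicExt_skewWord_zero (d : S) : cyclicExt (skewWord σ x y V) d 0 = x := by
  simpa [skewWord] using cyclicExt_natCast (skewWord σ x y V) d (n := 0) (by simp [skewWord])

lemma cyclicExt_skewWord_length_add_one (d : S) :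
    cyclicExt (skewWord σ x y V) d (V.length + 1 : ℕ) = y := by
  simpa [skewWord] using cyclicExt_natCast (skewWord σ x y V) d (n := V.length + 1)
    (by rw [length_skewWord]; omega)

variable {σ} in
lemma skewSymmAbout_cyclicExt_skewWord (hσ : Function.Involutive σ) (d : S) :
    SkewSymmAbout σ (V.length + 1 : ℕ) (cyclicExt (skewWord σ x y V) d) 0 := by
  have hper := cyclicExt_periodic (skewWord σ x y V) d
  rw [length_skewWord, Nat.cast_mul, Nat.cast_ofNat] at hper
  refine skewSymmAbout_zero_of_lt hσ (by omega) hper fun r hr hrk => ?_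
  have e : -(r : ℤ) + 2 * (V.length + 1 : ℕ) = (2 * (V.length + 1) - r : ℕ) := by omega
  rw [← hper, e, cyclicExt_natCast _ _ (by rw [length_skewWord]; omega),
    cyclicExt_natCast _ _ (by rw [length_skewWord]; omega),
    getElem_skewWord_two_mul_sub σ x y V hr hrk]

variable {σ x y V} in
lemma cyclicExt_of_rotate_eq_skewWord (hσ : Function.Involutive σ) {W : List S} {j : ℕ}
    (h : W.rotate j = skewWord σ x y V) (d : S) :
    SkewSymmAbout σ (V.length + 1 : ℕ) (cyclicExt W d) j ∧ cyclicExt W d j = x ∧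
      cyclicExt W d (j + (V.length + 1 : ℕ)) = y := by
  have hrot (i : ℤ) : cyclicExt (W.rotate j) d i = cyclicExt W d (i + j) :=
    cyclicExt_rotate W d j i
  refine ⟨fun i hi => ?_, ?_, ?_⟩
  · have := skewSymmAbout_cyclicExt_skewWord x y V hσ d i hi
    rw [← h, hrot, hrot] at this
    convert this using 3 <;> ring
  · rw [← zero_add (j : ℤ), ← hrot, h, cyclicExt_skewWord_zero]
  · rw [add_comm, ← hrot, h, cyclicExt_skewWord_length_add_one]

end SkewWord

lemma SkewSymmAbout.apply_add_two_mul_sub {σ : S → S} (hσ : Function.Injective σ)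
    {k : ℤ} {f : ℤ → S} {a b : ℤ} (ha : SkewSymmAbout σ k f a) (hb : SkewSymmAbout σ k f b)
    {i : ℤ} (h₁ : ¬ k ∣ i - a) (h₂ : ¬ k ∣ i + b - 2 * a) : f (i + 2 * (b - a)) = f i := by
  have e := hσ ((ha _ h₁).symm.trans ((congrArg f (by ring)).trans (hb _ h₂)))
  rwa [show a + (i - a) = i by ring, show b + (i + b - 2 * a) = i + 2 * (b - a) by ring,
    eq_comm] at e

lemma SkewSymmAbout.add_self {σ : S → S} {k : ℤ} {f : ℤ → S} {a : ℤ}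
    (hper : Function.Periodic f (2 * k)) (h : SkewSymmAbout σ k f a) :
    SkewSymmAbout σ k f (a + k) := by
  intro i hi
  have := h (i - k) fun hd => hi (by simpa using hd.add (dvd_refl k))
  rw [show a + k - i = a - (i - k) by ring, this, ← hper]
  ring_nf

lemma SkewSymmAbout.comp_mul {σ : S → S} {k k' : ℤ} {f : ℤ → S} {b c : ℤ}
    (h : SkewSymmAbout σ k f (b * c)) (hkk' : ∀ i, ¬ k' ∣ i → ¬ k ∣ i * c) :
    SkewSymmAbout σ k' (fun t => f (t * c)) b := by
  intro i hi
  simpa only [sub_mul, add_mul] using h (i * c) (hkk' i hi)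

/-- Between two consecutive multiples of `s`, skew symmetry about `0` and `1` makes `Y` constant
along steps of `2`; the values next to the multiples come from the reflections themselves. -/
lemma SkewSymmAbout.apply_modulus_of_one {σ : S → S} (hσ : Function.Involutive σ) {Y : ℤ → S}
    {s : ℕ} (hs : 2 ≤ s) (hper : Function.Periodic Y (2 * s)) (h₀ : SkewSymmAbout σ s Y 0)
    (h₁ : SkewSymmAbout σ s Y 1) :
    (Odd s → Y s = Y 1 ∧ Y (s + 1) = Y 0) ∧ (Even s → Y s = σ (Y 0) ∧ Y (s + 1) = σ (Y 1)) := by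
  have hs0 : (0 : ℤ) < s := by omega
  have between (m c : ℤ) (h₁ : s * c < m) (h₂ : m < s * (c + 1)) : ¬ (s : ℤ) ∣ m :=
    (Int.not_dvd_iff_lt_mul_succ m hs0).mpr ⟨c, h₁, h₂⟩
  have chain (n : ℕ) (t : ℤ) (ht : ∀ i : ℕ, i < 2 * n → ¬ (s : ℤ) ∣ t + i) :
      Y (t + 2 * n) = Y t := by
    induction n with
    | zero => simp
    | succ n ih =>
      have step := h₀.apply_add_two_mul_sub hσ.injective h₁ (i := t + 2 * n)
        (by simpa using ht (2 * n) (by omega))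
        (by simpa [add_assoc] using ht (2 * n + 1) (by omega))
      rw [← ih fun i hi => ht i (by omega), ← step]
      push_cast
      ring_nf
  have hY2 : Y 2 = σ (Y 0) := by
    have := h₁ 1 (between 1 0 (by simp) (by omega))
    norm_num at this
    rw [this, hσ]
  have hYm1 : Y (2 * s - 1) = σ (Y 1) := by
    have := h₀ 1 (between 1 0 (by simp) (by omega))
    norm_num at this
    rw [← this, ← hper (-1)]
    ring_nf
  refine ⟨fun ⟨n, hn⟩ => ⟨?_, ?_⟩, fun ⟨n, hn⟩ => ⟨?_, ?_⟩⟩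
  · have := chain n 1 fun i hi => between _ 0 (by omega) (by omega)
    rwa [show (1 : ℤ) + 2 * n = s by omega] at this
  · have := chain n (s + 1) fun i hi => between _ 1 (by omega) (by omega)
    rw [show (s + 1 : ℤ) + 2 * n = 0 + 2 * s by omega, hper] at this
    exact this.symm
  · have := chain (n - 1) 2 fun i hi => between _ 0 (by omega) (by omega)
    rwa [show (2 : ℤ) + 2 * (n - 1 : ℕ) = s by omega, hY2] at this
  · have := chain (n - 1) (s + 1) fun i hi => between _ 1 (by omega) (by omega)
    rw [show (s + 1 : ℤ) + 2 * (n - 1 : ℕ) = 2 * s - 1 by omega, hYm1] at this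
    exact this.symm

lemma _root_.Function.Periodic.comp_mul_right {β : Type*} {f : ℤ → β} {p c : ℤ}
    (hper : Function.Periodic f (p * c)) : Function.Periodic (fun t => f (t * c)) p :=
  fun t => by simpa only [add_mul] using hper (t * c)

lemma _root_.Function.Periodic.of_isCoprime {β : Type*} {f : ℤ → β} {a b c : ℤ}
    (ha : Function.Periodic f (a * c)) (hb : Function.Periodic f (b * c)) (hab : IsCoprime a b) :
    Function.Periodic f c := by
  obtain ⟨u, v, huv⟩ := hab
  have := (ha.int_mul u).add_period (hb.int_mul v)
  simp only [Int.cast_id] at this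
  rwa [show u * (a * c) + v * (b * c) = c by linear_combination c * huv] at this

lemma periodic_two_mul_sub_of_symm {β : Type*} {q : ℤ → β} {a b : ℤ}
    (ha : ∀ i, q (a - i) = q (a + i)) (hb : ∀ i, q (b - i) = q (b + i)) :
    Function.Periodic q (2 * (b - a)) := by
  intro m
  calc q (m + 2 * (b - a)) = q (b - (m + b - 2 * a)) := by rw [hb]; ring_nf
    _ = q (a - (m - a)) := by ring_nf
    _ = q m := by rw [ha]; ring_nf

lemma _root_.Nat.Coprime.odd_of_even_right {a s : ℕ} (hcop : Nat.Coprime a s) (hs : Even s) :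
    Odd a := by
  by_contra ha
  exact Nat.not_coprime_of_dvd_of_dvd one_lt_two (Nat.not_odd_iff_even.mp ha).two_dvd
    hs.two_dvd hcop

/-- Recording a letter only up to inversion, as an unordered pair, turns `v = u ∨ v = u⁻¹` into
an equation, to which periodicity arguments apply. -/
def orbitPair (σ : S → S) (u : S) : Sym2 S := s(u, σ u)

lemma orbitPair_eq_orbitPair_iff {σ : S → S} (hσ : Function.Involutive σ) {u v : S} :
    orbitPair σ u = orbitPair σ v ↔ v = u ∨ v = σ u := by
  simp only [orbitPair, Sym2.eq_iff]
  constructor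
  · rintro (⟨rfl, -⟩ | ⟨rfl, -⟩)
    exacts [Or.inl rfl, Or.inr (hσ v).symm]
  · rintro (rfl | rfl)
    exacts [Or.inl ⟨rfl, rfl⟩, Or.inr ⟨(hσ u).symm, rfl⟩]

lemma orbitPair_apply {σ : S → S} (hσ : Function.Involutive σ) (u : S) :
    orbitPair σ (σ u) = orbitPair σ u := by
  rw [orbitPair, orbitPair, hσ, Sym2.eq_swap]

lemma SkewSymmAbout.orbitPair_sub {σ : S → S} (hσ : Function.Involutive σ) {k : ℤ} {f : ℤ → S}
    {a : ℤ} (hper : Function.Periodic f (2 * k)) (h : SkewSymmAbout σ k f a) (i : ℤ) :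
    orbitPair σ (f (a - i)) = orbitPair σ (f (a + i)) := by
  by_cases hi : k ∣ i
  · obtain ⟨c, rfl⟩ := hi
    rw [show a - k * c = a + k * c - c * (2 * k) by ring]
    simpa using congrArg (orbitPair σ) ((hper.int_mul c).sub_eq (a + k * c))
  · rw [h i hi, orbitPair_apply hσ]

section Coprime

variable {σ : S → S} {h : ℤ → S} {s a : ℕ}

lemma SkewSymmAbout.apply_modulus_of_odd (hσ : Function.Involutive σ) (hs : 2 ≤ s) (ha : Odd a)
    (hcop : Nat.Coprime a s) (hper : Function.Periodic h (2 * s))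
    (h₀ : SkewSymmAbout σ s h 0) (hₐ : SkewSymmAbout σ s h a) :
    (Odd s → h a = h s ∧ h (a + s) = h 0) ∧ (Even s → h s = σ (h 0) ∧ h (a + s) = σ (h a)) := by
  have hndvd (i : ℤ) (hi : ¬ (s : ℤ) ∣ i) : ¬ (s : ℤ) ∣ i * a := fun hd =>
    hi ((Nat.isCoprime_iff_coprime.mpr hcop).symm.dvd_of_dvd_mul_right hd)
  have hY := SkewSymmAbout.apply_modulus_of_one hσ hs
    (mul_comm (a : ℤ) _ ▸ hper.nat_mul a).comp_mul_right
    ((zero_mul (a : ℤ)).symm ▸ h₀ |>.comp_mul hndvd)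
    ((one_mul (a : ℤ)).symm ▸ hₐ |>.comp_mul hndvd)
  obtain ⟨m, rfl⟩ := ha
  have hperm : Function.Periodic h (m * (2 * s)) := by simpa using hper.int_mul m
  have e₁ : h (s * ((2 * m + 1 : ℕ) : ℤ)) = h s := by
    rw [← hperm s]
    push_cast
    ring_nf
  have e₂ : h ((s + 1) * ((2 * m + 1 : ℕ) : ℤ)) = h ((2 * m + 1 : ℕ) + s) := by
    rw [← hperm ((2 * m + 1 : ℕ) + s)]
    push_cast
    ring_nf
  simp only [e₁, e₂, zero_mul, one_mul] at hY
  exact ⟨fun hs => ⟨(hY.1 hs).1.symm, (hY.1 hs).2⟩, hY.2⟩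

lemma SkewSymmAbout.periodic_orbitPair (hσ : Function.Involutive σ) (hcop : Nat.Coprime a s)
    (hper : Function.Periodic h (2 * s)) (h₀ : SkewSymmAbout σ s h 0)
    (hₐ : SkewSymmAbout σ s h a) : Function.Periodic (orbitPair σ ∘ h) 2 := by
  have h₁ : Function.Periodic (orbitPair σ ∘ h) ((a : ℤ) * 2) := by
    simpa [mul_comm] using periodic_two_mul_sub_of_symm (q := orbitPair σ ∘ h)
      (h₀.orbitPair_sub hσ hper) (hₐ.orbitPair_sub hσ hper)
  have h₂ : Function.Periodic (orbitPair σ ∘ h) ((s : ℤ) * 2) := by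
    simpa [mul_comm] using hper.comp (orbitPair σ)
  exact h₁.of_isCoprime h₂ (Nat.isCoprime_iff_coprime.mpr hcop)

lemma SkewSymmAbout.apply_modulus_of_coprime (hσ : Function.Involutive σ) (hs : 2 ≤ s)
    (hcop : Nat.Coprime a s) (hper : Function.Periodic h (2 * s))
    (h₀ : SkewSymmAbout σ s h 0) (hₐ : SkewSymmAbout σ s h a) :
    (Odd s → ({h 0, h s} : Set S) = {h a, h (a + s)} ∧
      ∀ m : ℤ, orbitPair σ (h (2 * m)) = orbitPair σ (h 0) ∧
        orbitPair σ (h (2 * m + 1)) = orbitPair σ (h s)) ∧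
    (Even s → h s = σ (h 0) ∧ h (a + s) = σ (h a) ∧
      ∀ m : ℤ, orbitPair σ (h (2 * m)) = orbitPair σ (h 0) ∧
        orbitPair σ (h (2 * m + 1)) = orbitPair σ (h a)) := by
  have hq := h₀.periodic_orbitPair hσ hcop hper hₐ
  have hpar (m n : ℤ) : orbitPair σ (h (2 * m + n)) = orbitPair σ (h n) := by
    simpa [add_comm, mul_comm] using hq.int_mul m n
  have hodd {n : ℕ} (hn : Odd n) : orbitPair σ (h n) = orbitPair σ (h 1) := by
    obtain ⟨m, rfl⟩ := hn
    simpa using hpar m 1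
  have heven (m : ℤ) : orbitPair σ (h (2 * m)) = orbitPair σ (h 0) := by simpa using hpar m 0
  refine ⟨fun hs₂ => ⟨?_, fun m => ⟨heven m, by rw [hpar, hodd hs₂]⟩⟩, fun hs₂ => ?_⟩
  · rcases Nat.even_or_odd a with ha | ha
    · have hₐₛ : SkewSymmAbout σ s h ((a + s : ℕ) : ℤ) := by simpa using hₐ.add_self hper
      obtain ⟨e₁, e₂⟩ := (h₀.apply_modulus_of_odd hσ hs (ha.add_odd hs₂)
        (Nat.coprime_add_self_left.mpr hcop) hper hₐₛ).1 hs₂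
      rw [Nat.cast_add, add_assoc, ← two_mul, hper] at e₂
      rw [← Nat.cast_add, e₁, e₂]
    · obtain ⟨e₁, e₂⟩ := (h₀.apply_modulus_of_odd hσ hs ha hcop hper hₐ).1 hs₂
      rw [e₁, e₂, Set.pair_comm]
  · have ha := hcop.odd_of_even_right hs₂
    obtain ⟨e₁, e₂⟩ := (h₀.apply_modulus_of_odd hσ hs ha hcop hper hₐ).2 hs₂
    exact ⟨e₁, e₂, fun m => ⟨heven m, by rw [hpar, hodd ha]⟩⟩

end Coprime

lemma SkewSymmAbout.apply_add_two_mul_mul_of_not_dvd {σ : S → S} (hσ : Function.Injective σ)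
    {f : ℤ → S} {g s a : ℕ} (hcop : Nat.Coprime a s) (hper : Function.Periodic f (2 * (s * g)))
    (h₀ : SkewSymmAbout σ (s * g) f 0) (hₐ : SkewSymmAbout σ (s * g) f (a * g))
    {r : ℤ} (hr : ¬ (g : ℤ) ∣ r) (m : ℤ) : f (r + 2 * m * g) = f r := by
  set φ : ℤ → S := fun n => f (r + n * g)
  have hnd (n : ℤ) : ¬ (s * g : ℤ) ∣ r + n * g := fun hd =>
    hr ((dvd_add_left (dvd_mul_left _ n)).mp ((dvd_mul_left _ _).trans hd))
  have h₁ : Function.Periodic φ (a * 2) := fun n => by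
    have := h₀.apply_add_two_mul_sub hσ hₐ (i := r + n * g) (by simpa using hnd n)
      (by simpa [add_assoc, add_mul] using hnd (n + a))
    simp only [φ]
    rw [← this]
    ring_nf
  have h₂ : Function.Periodic φ (s * 2) := fun n => by
    simp only [φ]
    rw [← hper (r + n * g)]
    ring_nf
  have := (h₁.of_isCoprime h₂ (Nat.isCoprime_iff_coprime.mpr hcop)).int_mul m 0
  simpa [φ, mul_comm, mul_left_comm] using this

section Blocks

variable (σ : S → S) (F : ℕ → S) {g : ℕ}

lemma map_range_two_mul_eq_block (hg : 0 < g) (t : ℕ)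
    (hrep : ∀ u, 0 < u → u < g → F (2 * t * g + u) = F u)
    (hrefl : ∀ u, 0 < u → u < g → F (2 * t * g + g + u) = σ (F (g - u))) :
    (List.range (2 * g)).map (fun u => F (2 * t * g + u)) =
      [F (2 * t * g)] ++ (List.range (g - 1)).map (fun u => F (u + 1)) ++ [F (2 * t * g + g)] ++
        invol σ ((List.range (g - 1)).map (fun u => F (u + 1))) := by
  apply List.ext_getElem (by simp [invol]; omega)
  intro u h₁ _
  have hu : u < 2 * g := by simpa using h₁
  simp only [List.getElem_map, List.getElem_range, List.getElem_append, getElem_invol,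
    List.length_append, List.length_singleton, List.length_map, List.length_range]
  split_ifs
  · obtain rfl : u = 0 := by omega
    simp
  · rw [hrep u (by omega) (by omega), Nat.sub_add_cancel (by omega)]
  · obtain rfl : g = u := by omega
    simp [show g - (1 + (g - 1)) = 0 by omega]
  · obtain ⟨v, rfl⟩ : ∃ v, u = g + v := ⟨u - g, by omega⟩
    rw [← add_assoc, hrefl v (by omega) (by omega)]
    congr 2
    omega

lemma map_range_eq_flatten_blocks (hg : 0 < g) (s : ℕ)
    (hrep : ∀ t u, 0 < u → u < g → F (2 * t * g + u) = F u)
    (hrefl : ∀ t u, 0 < u → u < g → F (2 * t * g + g + u) = σ (F (g - u))) :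
    (List.range (s * (2 * g))).map F = ((List.range s).map fun t =>
      [F (2 * t * g)] ++ (List.range (g - 1)).map (fun u => F (u + 1)) ++ [F (2 * t * g + g)] ++
        invol σ ((List.range (g - 1)).map (fun u => F (u + 1)))).flatten := by
  induction s with
  | zero => simp
  | succ s ih =>
    rw [Nat.succ_mul, List.range_add, List.map_append, ih, List.range_succ, List.map_append,
      List.flatten_append, List.map_map]
    simp only [List.map_cons, List.map_nil, List.flatten_cons, List.flatten_nil, List.append_nil,
      ← map_range_two_mul_eq_block σ F hg s (hrep s) (hrefl s)]
    congr 2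
    ext u
    simp only [Function.comp_apply]
    ring_nf

end Blocks

lemma exists_epow_eq {σ : S → S} (hσ : Function.Involutive σ) {u x : S}
    (h : orbitPair σ u = orbitPair σ x) : ∃ ε : ℤ, (ε = 1 ∨ ε = -1) ∧ u = epow σ x ε := by
  rcases (orbitPair_eq_orbitPair_iff hσ).mp h.symm with rfl | rfl
  · exact ⟨1, Or.inl rfl, by simp [epow]⟩
  · exact ⟨-1, Or.inr rfl, by simp [epow]⟩

/-- `∏_{t < s} x^{α t} V y^{β t} V⁻¹`. -/
def blockProd (σ : S → S) (s : ℕ) (x y : S) (V : List S) (α β : ℕ → ℤ) : List S :=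
  ((List.range s).map fun t => [epow σ x (α t)] ++ V ++ [epow σ y (β t)] ++ invol σ V).flatten

lemma exists_map_range_eq_blockProd {σ : S → S} (hσ : Function.Involutive σ) {f : ℤ → S}
    {g : ℕ} (hg : 0 < g) (s : ℕ) {x y : S}
    (hrep : ∀ r m : ℤ, ¬ (g : ℤ) ∣ r → f (r + 2 * m * g) = f r)
    (hrefl : ∀ r : ℤ, ¬ (g : ℤ) ∣ r → f (-r) = σ (f r))
    (hx : ∀ m : ℤ, orbitPair σ (f (2 * m * g)) = orbitPair σ x)
    (hy : ∀ m : ℤ, orbitPair σ (f ((2 * m + 1) * g)) = orbitPair σ y) :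
    ∃ (V : List S) (α β : ℕ → ℤ), (∀ t, α t = 1 ∨ α t = -1) ∧ (∀ t, β t = 1 ∨ β t = -1) ∧
      (List.range (2 * (s * g))).map (fun n : ℕ => f n) = blockProd σ s x y V α β := by
  choose α hα hαeq using fun t : ℕ => exists_epow_eq hσ (hx t)
  choose β hβ hβeq using fun t : ℕ => exists_epow_eq hσ (hy t)
  have hnd {u : ℕ} (h₀ : 0 < u) (h₁ : u < g) : ¬ (g : ℤ) ∣ u :=
    Int.natCast_dvd_natCast.not.mpr (Nat.not_dvd_of_pos_of_lt h₀ h₁)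
  refine ⟨(List.range (g - 1)).map fun u => f (u + 1 : ℕ), α, β, hα, hβ, ?_⟩
  rw [blockProd, show 2 * (s * g) = s * (2 * g) by ring, map_range_eq_flatten_blocks σ _ hg s]
  · refine congrArg List.flatten (List.map_congr_left fun t _ => ?_)
    rw [← hαeq, ← hβeq]
    push_cast
    ring_nf
  · intro t u h₀ h₁
    simpa [add_comm] using hrep u t (hnd h₀ h₁)
  · intro t u h₀ h₁
    have hu : ¬ (g : ℤ) ∣ u - g := fun hd => hnd h₀ h₁ (by simpa using hd.add (dvd_refl _))
    rw [show ((2 * t * g + g + u : ℕ) : ℤ) = (u - g) + 2 * (t + 1) * g by push_cast; ring,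
      hrep _ _ hu, show (u : ℤ) - g = -((g - u : ℕ) : ℤ) by push_cast [h₁.le]; ring,
      hrefl _ (hnd (by omega) (by omega))]

theorem SkewSymmAbout.exists_blockProd {σ : S → S} (hσ : Function.Involutive σ) {f : ℤ → S}
    {k j : ℕ} (hk : 0 < k) (hkj : ¬ k ∣ j) (hper : Function.Periodic f (2 * k))
    (h₀ : SkewSymmAbout σ k f 0) (hⱼ : SkewSymmAbout σ k f j) :
    ∃ s, 2 ≤ s ∧
      (Odd s → ({f 0, f k} : Set S) = {f j, f (j + k)} ∧
        ∃ (V : List S) (α β : ℕ → ℤ), (∀ t, α t = 1 ∨ α t = -1) ∧ (∀ t, β t = 1 ∨ β t = -1) ∧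
          (List.range (2 * k)).map (fun n : ℕ => f n) = blockProd σ s (f 0) (f k) V α β) ∧
      (Even s → f k = σ (f 0) ∧ f (j + k) = σ (f j) ∧
        ∃ (V : List S) (α β : ℕ → ℤ), (∀ t, α t = 1 ∨ α t = -1) ∧ (∀ t, β t = 1 ∨ β t = -1) ∧
          (List.range (2 * k)).map (fun n : ℕ => f n) = blockProd σ s (f 0) (f j) V α β) := by
  obtain ⟨g, a, s, hg, hcop, rfl, rfl⟩ := Nat.exists_coprime' (Nat.gcd_pos_of_pos_right j hk)
  have hs : 2 ≤ s := by
    by_contra! hs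
    interval_cases s <;> simp_all
  push_cast at hper h₀ hⱼ ⊢
  have hnd (i : ℤ) (hi : ¬ (s : ℤ) ∣ i) : ¬ (s * g : ℤ) ∣ i * g :=
    (mul_dvd_mul_iff_right (by positivity)).not.mpr hi
  obtain ⟨hodd, heven⟩ := SkewSymmAbout.apply_modulus_of_coprime (h := fun m => f (m * g))
    hσ hs hcop (by simpa [mul_assoc] using hper : Function.Periodic f (2 * s * g)).comp_mul_right
    ((zero_mul (g : ℤ)).symm ▸ h₀ |>.comp_mul hnd) (hⱼ.comp_mul hnd)
  have blocks := fun x y => exists_map_range_eq_blockProd hσ hg s (x := x) (y := y)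
    (fun r m hr => h₀.apply_add_two_mul_mul_of_not_dvd hσ.injective hcop hper hⱼ hr m)
    (fun r hr => by simpa using h₀ r fun hd => hr ((dvd_mul_left _ _).trans hd))
  refine ⟨s, hs, fun hs₂ => ?_, fun hs₂ => ?_⟩
  · obtain ⟨hpair, hcls⟩ := hodd hs₂
    refine ⟨by simpa [add_mul] using hpair, ?_⟩
    simpa using blocks (f 0) (f (s * g)) (fun m => by simpa using (hcls m).1) (hcls · |>.2)
  · obtain ⟨e₁, e₂, hcls⟩ := heven hs₂
    refine ⟨by simpa using e₁, by simpa [add_mul] using e₂, ?_⟩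
    simpa using blocks (f 0) (f (a * g)) (fun m => by simpa using (hcls m).1) (hcls · |>.2)

theorem cyclic_conjugate_decomposition_general (σ : S → S) (hσ : Function.Involutive σ)
    (x₁ y₁ x₂ y₂ : S) (V₁ V₂ : List S) (k j : ℕ)
    (W : List S) (hW : W = [x₁] ++ V₁ ++ [y₁] ++ invol σ V₁)
    (hlen : W.length = 2 * k)
    (hj : ¬ j % k = 0)
    (hrot : W.rotate j = [x₂] ++ V₂ ++ [y₂] ++ invol σ V₂) :
    (({x₁, y₁} : Set S) = {x₂, y₂} ∧
      ∃ (s : ℕ) (V₃ : List S) (α β : ℕ → ℤ), Odd s ∧ 1 < s ∧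
        (∀ t, α t = 1 ∨ α t = -1) ∧ (∀ t, β t = 1 ∨ β t = -1) ∧
        W = ((List.range s).map fun t =>
          [epow σ x₁ (α t)] ++ V₃ ++ [epow σ y₁ (β t)] ++ invol σ V₃).flatten) ∨
    (y₁ = σ x₁ ∧ y₂ = σ x₂ ∧
      ∃ (s : ℕ) (V₃ : List S) (α β : ℕ → ℤ), Even s ∧ 0 < s ∧
        (∀ t, α t = 1 ∨ α t = -1) ∧ (∀ t, β t = 1 ∨ β t = -1) ∧
        W = ((List.range s).map fun t =>
          [epow σ x₁ (α t)] ++ V₃ ++ [epow σ x₂ (β t)] ++ invol σ V₃).flatten) := by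
  have hk₁ : V₁.length + 1 = k := by
    have := length_skewWord σ x₁ y₁ V₁
    rw [skewWord, ← hW] at this
    omega
  have hk₂ : V₂.length + 1 = k := by
    have := length_skewWord σ x₂ y₂ V₂
    rw [skewWord, ← hrot, List.length_rotate] at this
    omega
  obtain ⟨h₀, hf₀, hfk⟩ := cyclicExt_of_rotate_eq_skewWord hσ (W.rotate_zero.trans hW) x₁
  obtain ⟨hⱼ, hfj, hfjk⟩ := cyclicExt_of_rotate_eq_skewWord hσ hrot x₁
  simp only [hk₁, hk₂, Nat.cast_zero, zero_add] at h₀ hf₀ hfk hⱼ hfjk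
  have hper : Function.Periodic (cyclicExt W x₁) (2 * k) := by
    simpa [hlen] using cyclicExt_periodic W x₁
  obtain ⟨s, hs, hodd, heven⟩ := SkewSymmAbout.exists_blockProd hσ (by omega)
    (fun hd => hj (Nat.mod_eq_zero_of_dvd hd)) hper h₀ hⱼ
  rw [hf₀, hfk, hfj, hfjk, ← hlen, map_range_cyclicExt] at hodd heven
  rcases Nat.even_or_odd s with hs₂ | hs₂
  · obtain ⟨e₁, e₂, V, α, β, hα, hβ, hV⟩ := heven hs₂
    exact Or.inr ⟨e₁, e₂, s, V, α, β, hs₂, by omega, hα, hβ, hV⟩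
  · obtain ⟨hpair, V, α, β, hα, hβ, hV⟩ := hodd hs₂
    exact Or.inl ⟨hpair, s, V, α, β, hs₂, by omega, hα, hβ, hV⟩

/-- Suppose `W = x₁V₁y₁V₁⁻¹ = z₀z₁⋯z_{2k-1}` is a cyclically reduced word of length `2k`
in the free monoid on an alphabet with involution `z ↦ z⁻¹`, and for some `j ≢ 0 (mod k)`
the cyclic permutation `z_jz_{j+1}⋯z_{2k-1}z₀⋯z_{j-1}` of `W` is identically equal to
`x₂V₂y₂V₂⁻¹`.  Then either (1) `{x₁, y₁} = {x₂, y₂}` and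
`W ≡ ∏_{t=1}^{s} x₁^{α(t)} V₃ y₁^{β(t)} V₃⁻¹` for some odd `s > 1`, some word `V₃`, and
exponents `α(t), β(t) ∈ {±1}`; or (2) `y₁ = x₁⁻¹`, `y₂ = x₂⁻¹` and
`W ≡ ∏_{t=1}^{s} x₁^{α(t)} V₃ x₂^{β(t)} V₃⁻¹` for some even `s > 0`, some word `V₃`, and
exponents `α(t), β(t) ∈ {±1}`. -/
theorem cyclic_conjugate_decomposition (σ : S → S) (hσ : Function.Involutive σ)
    (x₁ y₁ x₂ y₂ : S) (V₁ V₂ : List S) (k j : ℕ)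
    (W : List S) (hW : W = [x₁] ++ V₁ ++ [y₁] ++ invol σ V₁)
    (hlen : W.length = 2 * k)
    (hred : CyclicallyReduced σ W)
    (hj : ¬ j % k = 0)
    (hrot : W.rotate j = [x₂] ++ V₂ ++ [y₂] ++ invol σ V₂) :
    (({x₁, y₁} : Set S) = {x₂, y₂} ∧
      ∃ (s : ℕ) (V₃ : List S) (α β : ℕ → ℤ), Odd s ∧ 1 < s ∧
        (∀ t, α t = 1 ∨ α t = -1) ∧ (∀ t, β t = 1 ∨ β t = -1) ∧
        W = ((List.range s).map fun t =>
          [epow σ x₁ (α t)] ++ V₃ ++ [epow σ y₁ (β t)] ++ invol σ V₃).flatten) ∨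
    (y₁ = σ x₁ ∧ y₂ = σ x₂ ∧
      ∃ (s : ℕ) (V₃ : List S) (α β : ℕ → ℤ), Even s ∧ 0 < s ∧
        (∀ t, α t = 1 ∨ α t = -1) ∧ (∀ t, β t = 1 ∨ β t = -1) ∧
        W = ((List.range s).map fun t =>
          [epow σ x₁ (α t)] ++ V₃ ++ [epow σ x₂ (β t)] ++ invol σ V₃).flatten) :=
  cyclic_conjugate_decomposition_general σ hσ x₁ y₁ x₂ y₂ V₁ V₂ k j W hW hlen hj hrot

end FreeMonoidInvolution
end

section
/- Let p and q be integers with p, q ≥ 2, and let H be the triangle group with presentation ⟨x, y | x^p, y^q, (xy)²⟩. If the element x^α y^β x^γ y^δ is trivial in H, where α, γ ∈ {1, 2, …, p−1} and β, δ ∈ {1, 2, …, q−1}, then one of the following holds: (1) 2 ∈ {p, q}; (2) α = β = γ = δ = 1; (3) α = γ = p−1 and β = δ = q−1. -/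
/-- The relators of the triangle group `⟨x, y | x^p, y^q, (xy)²⟩`, with `x` and `y` the
generators indexed by `true` and `false` respectively. -/
def triangleRels (p q : ℕ) : Set (FreeGroup Bool) :=
  {FreeGroup.of true ^ p, FreeGroup.of false ^ q, (FreeGroup.of true * FreeGroup.of false) ^ 2}

/-!
Put `a = π/p`, `b = π/q` and pick `K` with `cos a cos b = K sin a sin b`. In the quaternion
algebra `ℍ[ℝ, -1, 0, K² - 1]` both `i` and `J = K i + j` square to `-1`, so `x ↦ cos a + sin a i`
and `y ↦ cos b + sin b J` define a homomorphism from the triangle group to the units modulo `±1`: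
`x^p` and `y^q` go to `-1`, and the image of `xy` has real part `cos a cos b - K sin a sin b = 0`,
hence squares to `-1`. (The algebra is Hamilton's, degenerate or split according as the triangle
group is spherical, Euclidean or hyperbolic; the argument is the same in all three cases.)

If `x^α y^β x^γ y^δ = 1`, put `A = α a`, `B = β b`, `C = γ a`, `D = δ b`. The image of `x^α y^β`
is then `±` that of `(x^γ y^δ)⁻¹`; comparing coordinates forces the sign `-`, `A = C`, `B = D` and
`cot A cot B = cot a cot b`. As `cot` decreases on `(0, π)`, `A ∈ [a, π - a]` and
`B ∈ [b, π - b]`, for `p, q ≥ 3` this leaves `A = a, B = b` or `A = π - a, B = π - b`.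
-/

open Real Set Quaternion

namespace Subgroup

variable {G : Type*} [Group G] [HasDistribNeg G]

instance normal_zpowers_neg_one : (zpowers (-1 : G)).Normal where
  conj_mem n hn g := by
    obtain ⟨k, rfl⟩ := mem_zpowers_iff.mp hn
    rw [← ((Commute.neg_one_left g).zpow_left k).eq, mul_inv_cancel_right]
    exact zpow_mem (mem_zpowers _) k

theorem mem_zpowers_neg_one_iff {g : G} : g ∈ zpowers (-1 : G) ↔ g = 1 ∨ g = -1 := by
  refine ⟨fun hg => ?_, ?_⟩
  · obtain ⟨k, rfl⟩ := mem_zpowers_iff.mp hg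
    rw [neg_one_zpow_eq_ite]
    split_ifs <;> simp
  · rintro (rfl | rfl)
    · exact one_mem _
    · exact mem_zpowers _

end Subgroup

section TriangleGroupLift

variable {G : Type*} [Group G] {p q : ℕ} {g h : G}

def triangleGroupLift (hg : g ^ p = 1) (hh : h ^ q = 1) (hgh : (g * h) ^ 2 = 1) :
    PresentedGroup (triangleRels p q) →* G :=
  PresentedGroup.toGroup (f := fun b => bif b then g else h) <| by
    rintro r (rfl | rfl | rfl) <;> simpa

@[simp]
theorem triangleGroupLift_of_true (hg : g ^ p = 1) (hh : h ^ q = 1) (hgh : (g * h) ^ 2 = 1) :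
    triangleGroupLift hg hh hgh (PresentedGroup.of true) = g :=
  PresentedGroup.toGroup.of _

@[simp]
theorem triangleGroupLift_of_false (hg : g ^ p = 1) (hh : h ^ q = 1) (hgh : (g * h) ^ 2 = 1) :
    triangleGroupLift hg hh hgh (PresentedGroup.of false) = h :=
  PresentedGroup.toGroup.of _

end TriangleGroupLift

theorem cos_mul_sin_lt_cos_mul_sin {a A : ℝ} (h₀ : a < A) (h₁ : A < a + π) :
    cos A * sin a < cos a * sin A := by
  have := sin_pos_of_pos_of_lt_pi (sub_pos.mpr h₀) (by linarith)
  rw [sin_sub] at this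
  linarith

theorem cos_mul_sin_le_cos_mul_sin {a A : ℝ} (h₀ : a ≤ A) (h₁ : A ≤ a + π) :
    cos A * sin a ≤ cos a * sin A := by
  have := sin_nonneg_of_nonneg_of_le_pi (sub_nonneg.mpr h₀) (by linarith)
  rw [sin_sub] at this
  linarith

theorem eq_of_cos_mul_cos_eq_of_cos_pos {a b A B : ℝ} (ha : 0 < a) (hb : 0 < b)
    (hA : A ∈ Ico a π) (hB : B ∈ Ico b π) (hcA : 0 < cos A) (hcB : 0 < cos B)
    (h : cos A * cos B * (sin a * sin b) = cos a * cos b * (sin A * sin B)) :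
    A = a ∧ B = b := by
  have hx := mul_pos hcA (sin_pos_of_pos_of_lt_pi ha (by linarith [hA.1, hA.2]))
  have hy := mul_pos hcB (sin_pos_of_pos_of_lt_pi hb (by linarith [hB.1, hB.2]))
  have hxX := cos_mul_sin_le_cos_mul_sin hA.1 (by linarith [hA.2])
  have hyY := cos_mul_sin_le_cos_mul_sin hB.1 (by linarith [hB.2])
  constructor
  · by_contra hne
    have := cos_mul_sin_lt_cos_mul_sin (lt_of_le_of_ne hA.1 (Ne.symm hne)) (by linarith [hA.2])
    nlinarith
  · by_contra hne
    have := cos_mul_sin_lt_cos_mul_sin (lt_of_le_of_ne hB.1 (Ne.symm hne)) (by linarith [hB.2])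
    nlinarith

theorem eq_or_eq_pi_sub_of_cos_mul_cos_eq {a b A B : ℝ} (ha : a ∈ Ioo 0 (π / 2))
    (hb : b ∈ Ioo 0 (π / 2)) (hA : A ∈ Icc a (π - a)) (hB : B ∈ Icc b (π - b))
    (h : cos A * cos B * (sin a * sin b) = cos a * cos b * (sin A * sin B)) :
    (A = a ∧ B = b) ∨ (A = π - a ∧ B = π - b) := by
  obtain ⟨ha₀, ha₁⟩ := ha
  obtain ⟨hb₀, hb₁⟩ := hb
  have hcc : 0 < cos A * cos B := by
    have hca := cos_pos_of_mem_Ioo ⟨by linarith, ha₁⟩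
    have hcb := cos_pos_of_mem_Ioo ⟨by linarith, hb₁⟩
    have hsA := sin_pos_of_pos_of_lt_pi (x := A) (by linarith [hA.1]) (by linarith [hA.2])
    have hsB := sin_pos_of_pos_of_lt_pi (x := B) (by linarith [hB.1]) (by linarith [hB.2])
    have hsab := mul_pos (sin_pos_of_pos_of_lt_pi ha₀ (by linarith))
      (sin_pos_of_pos_of_lt_pi hb₀ (by linarith))
    refine pos_of_mul_pos_left ?_ hsab.le
    rw [h]
    exact mul_pos (mul_pos hca hcb) (mul_pos hsA hsB)
  rcases mul_pos_iff.mp hcc with ⟨hcA, hcB⟩ | ⟨hcA, hcB⟩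
  · exact .inl (eq_of_cos_mul_cos_eq_of_cos_pos ha₀ hb₀ ⟨hA.1, by linarith [hA.2]⟩
      ⟨hB.1, by linarith [hB.2]⟩ hcA hcB h)
  · -- `A ↦ π - A` flips the signs of both cosines and fixes the sines
    obtain ⟨hA', hB'⟩ := eq_of_cos_mul_cos_eq_of_cos_pos (A := π - A) (B := π - B) ha₀ hb₀
      ⟨by linarith [hA.2], by linarith [hA.1]⟩ ⟨by linarith [hB.2], by linarith [hB.1]⟩
      (by rwa [cos_pi_sub, neg_pos]) (by rwa [cos_pi_sub, neg_pos])
      (by rw [cos_pi_sub, cos_pi_sub, sin_pi_sub, sin_pi_sub]; linarith)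
    exact .inr ⟨by linarith, by linarith⟩

theorem pi_div_natCast_mem_Ioo {p : ℕ} (hp : 2 < p) : π / p ∈ Ioo 0 (π / 2) :=
  ⟨by positivity, div_lt_div_of_pos_left pi_pos two_pos (by exact_mod_cast hp)⟩

theorem natCast_mul_pi_div_inj {m n p : ℕ} (hp : p ≠ 0) :
    (m : ℝ) * (π / p) = n * (π / p) ↔ m = n := by
  rw [mul_left_inj' (div_ne_zero pi_ne_zero (Nat.cast_ne_zero.mpr hp)), Nat.cast_inj]

theorem natCast_sub_one_mul_pi_div {p : ℕ} (hp : p ≠ 0) :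
    ((p - 1 : ℕ) : ℝ) * (π / p) = π - π / p := by
  rw [Nat.cast_sub (by omega), Nat.cast_one]
  field_simp

theorem natCast_mul_pi_div_eq_iff {n p : ℕ} (hp : p ≠ 0) :
    (n : ℝ) * (π / p) = π / p ↔ n = 1 := by
  simpa using natCast_mul_pi_div_inj (n := 1) hp

theorem natCast_mul_pi_div_eq_pi_sub_iff {n p : ℕ} (hp : p ≠ 0) :
    (n : ℝ) * (π / p) = π - π / p ↔ n = p - 1 := by
  rw [← natCast_sub_one_mul_pi_div hp, natCast_mul_pi_div_inj hp]

theorem natCast_mul_pi_div_mem_Icc {n p : ℕ} (h₁ : 1 ≤ n) (h₂ : n ≤ p - 1) :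
    (n : ℝ) * (π / p) ∈ Icc (π / p) (π - π / p) := by
  have hpi : 0 ≤ π / p := by positivity
  refine ⟨?_, ?_⟩
  · simpa using mul_le_mul_of_nonneg_right (Nat.one_le_cast.mpr h₁) hpi
  · rw [← natCast_sub_one_mul_pi_div (by omega)]
    exact mul_le_mul_of_nonneg_right (Nat.cast_le.mpr h₂) hpi

theorem natCast_mul_pi_div_mem_Ioo {n p : ℕ} (h₁ : 1 ≤ n) (h₂ : n ≤ p - 1) :
    (n : ℝ) * (π / p) ∈ Ioo 0 π := by
  have hpi : 0 < π / p := div_pos pi_pos (by exact_mod_cast (show 0 < p by omega))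
  exact Icc_subset_Ioo hpi (by linarith) (natCast_mul_pi_div_mem_Icc h₁ h₂)

noncomputable section

namespace TriangleGroup

variable (K : ℝ)

abbrev Quat : Type := ℍ[ℝ, -1, 0, K ^ 2 - 1]

def rotI : Circle →* (Quat K)ˣ :=
  (Units.map (Complex.liftAux ⟨0, 1, 0, 0⟩ (by ext <;> simp)).toMonoidHom).comp Circle.toUnits

def rotJ : Circle →* (Quat K)ˣ :=
  (Units.map (Complex.liftAux ⟨0, K, 1, 0⟩ (by ext <;> simp; ring)).toMonoidHom).comp
    Circle.toUnits

def rotPair (A B : ℝ) : (Quat K)ˣ := rotI K (.exp A) * rotJ K (.exp B)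

variable {K}

@[simp]
theorem coe_rotI_exp (θ : ℝ) :
    (rotI K (.exp θ) : Quat K) = ⟨cos θ, sin θ, 0, 0⟩ := by
  ext <;> simp [rotI, Complex.liftAux_apply, QuaternionAlgebra.algebraMap_eq, Circle.coe_exp]

@[simp]
theorem coe_rotJ_exp (θ : ℝ) :
    (rotJ K (.exp θ) : Quat K) = ⟨cos θ, K * sin θ, sin θ, 0⟩ := by
  ext <;> simp [rotJ, Complex.liftAux_apply, QuaternionAlgebra.algebraMap_eq, Circle.coe_exp]
  ring

theorem rotI_exp_pi_div_pow {p : ℕ} (hp : p ≠ 0) : rotI K (.exp (π / p)) ^ p = -1 := by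
  rw [← map_pow, ← Circle.exp_natCast_mul, mul_div_cancel₀ _ (Nat.cast_ne_zero.mpr hp)]
  exact Units.ext <| by ext <;> simp

theorem rotJ_exp_pi_div_pow {q : ℕ} (hq : q ≠ 0) : rotJ K (.exp (π / q)) ^ q = -1 := by
  rw [← map_pow, ← Circle.exp_natCast_mul, mul_div_cancel₀ _ (Nat.cast_ne_zero.mpr hq)]
  exact Units.ext <| by ext <;> simp

theorem coe_rotPair (A B : ℝ) : (rotPair K A B : Quat K) =
    ⟨cos A * cos B - K * sin A * sin B, K * cos A * sin B + sin A * cos B, cos A * sin B,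
      sin A * sin B⟩ := by
  ext <;> simp [rotPair] <;> ring

theorem coe_rotPair_inv (A B : ℝ) : (↑(rotPair K A B)⁻¹ : Quat K) =
    ⟨cos A * cos B - K * sin A * sin B, -(K * cos A * sin B + sin A * cos B), -(cos A * sin B),
      -(sin A * sin B)⟩ := by
  rw [rotPair, mul_inv_rev, ← map_inv (rotI K), ← map_inv (rotJ K), ← Circle.exp_neg,
    ← Circle.exp_neg]
  simp only [Units.val_mul, coe_rotI_exp, coe_rotJ_exp, QuaternionAlgebra.mk_mul_mk, cos_neg,
    sin_neg]
  ext <;> ring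

theorem rotPair_sq {a b : ℝ} (h : cos a * cos b = K * sin a * sin b) :
    rotPair K a b ^ 2 = -1 := by
  have ha := sin_sq_add_cos_sq a
  have hb := sin_sq_add_cos_sq b
  ext <;> simp [pow_two, coe_rotPair] <;> grind

theorem eq_of_rotPair_im_eq {A B C D : ℝ} (hA : A ∈ Ioo 0 π) (hB : B ∈ Ioo 0 π)
    (hC : C ∈ Ioo 0 π) (hD : D ∈ Ioo 0 π)
    (h : (rotPair K A B : Quat K).im = (rotPair K C D : Quat K).im) :
    A = C ∧ B = D := by
  have hI := congrArg QuaternionAlgebra.imI h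
  have hJ := congrArg QuaternionAlgebra.imJ h
  have hK := congrArg QuaternionAlgebra.imK h
  simp only [coe_rotPair, QuaternionAlgebra.imI_im, QuaternionAlgebra.imJ_im,
    QuaternionAlgebra.imK_im] at hI hJ hK
  have hsA := sin_pos_of_pos_of_lt_pi hA.1 hA.2
  have hsB := sin_pos_of_pos_of_lt_pi hB.1 hB.2
  have hsD := sin_pos_of_pos_of_lt_pi hD.1 hD.2
  have hsBD : sin B = sin D := by
    have : sin B ^ 2 = sin D ^ 2 := by
      linear_combination sin D ^ 2 * sin_sq_add_cos_sq C - sin B ^ 2 * sin_sq_add_cos_sq A +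
        (cos A * sin B + cos C * sin D) * hJ + (sin A * sin B + sin C * sin D) * hK
    exact (pow_left_inj₀ hsB.le hsD.le two_ne_zero).mp this
  have hAC : A = C := by
    refine injOn_cos ⟨hA.1.le, hA.2.le⟩ ⟨hC.1.le, hC.2.le⟩ (mul_right_cancel₀ hsB.ne' ?_)
    rw [hJ, hsBD]
  have hBD : B = D := by
    refine injOn_cos ⟨hB.1.le, hB.2.le⟩ ⟨hD.1.le, hD.2.le⟩ (mul_left_cancel₀ hsA.ne' ?_)
    subst hAC
    rw [hsBD] at hI
    linarith
  exact ⟨hAC, hBD⟩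

theorem eq_of_rotPair_mul_rotPair_mem_zpowers {A B C D : ℝ} (hA : A ∈ Ioo 0 π)
    (hB : B ∈ Ioo 0 π) (hC : C ∈ Ioo 0 π) (hD : D ∈ Ioo 0 π)
    (h : rotPair K A B * rotPair K C D ∈ Subgroup.zpowers (-1)) :
    A = C ∧ B = D ∧ cos A * cos B = K * sin A * sin B := by
  rcases Subgroup.mem_zpowers_neg_one_iff.mp h with h | h
  · have hk := congrArg (fun u : (Quat K)ˣ => (u : Quat K).imK)
      (eq_inv_of_mul_eq_one_left h)
    simp only [coe_rotPair, coe_rotPair_inv] at hk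
    nlinarith [mul_pos (sin_pos_of_pos_of_lt_pi hA.1 hA.2) (sin_pos_of_pos_of_lt_pi hB.1 hB.2),
      mul_pos (sin_pos_of_pos_of_lt_pi hC.1 hC.2) (sin_pos_of_pos_of_lt_pi hD.1 hD.2)]
  · have e := congrArg Units.val (eq_mul_inv_of_mul_eq h)
    rw [Units.val_mul, Units.val_neg, Units.val_one, neg_one_mul, coe_rotPair_inv] at e
    obtain ⟨rfl, rfl⟩ := eq_of_rotPair_im_eq hA hB hC hD <| by
      rw [e, coe_rotPair]
      ext <;> simp
    rw [coe_rotPair] at e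
    have := congrArg QuaternionAlgebra.re e
    simp only [QuaternionAlgebra.re_neg] at this
    exact ⟨rfl, rfl, by linarith⟩

theorem rotPair_mul_rotPair_mem_zpowers_of_word {p q α β γ δ : ℕ}
    (hp : p ≠ 0) (hq : q ≠ 0)
    (hK : cos (π / p) * cos (π / q) = K * sin (π / p) * sin (π / q))
    (h : (PresentedGroup.of (rels := triangleRels p q) true) ^ α *
         (PresentedGroup.of (rels := triangleRels p q) false) ^ β *
         (PresentedGroup.of (rels := triangleRels p q) true) ^ γ *
         (PresentedGroup.of (rels := triangleRels p q) false) ^ δ = 1) :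
    rotPair K (α * (π / p)) (β * (π / q)) * rotPair K (γ * (π / p)) (δ * (π / q)) ∈
      Subgroup.zpowers (-1) := by
  let mk := QuotientGroup.mk' (Subgroup.zpowers (-1 : (Quat K)ˣ))
  have mk_neg_one : mk (-1) = 1 := (QuotientGroup.eq_one_iff _).mpr (Subgroup.mem_zpowers _)
  have hg : mk (rotI K (.exp (π / p))) ^ p = 1 := by
    rw [← map_pow, rotI_exp_pi_div_pow hp, mk_neg_one]
  have hh : mk (rotJ K (.exp (π / q))) ^ q = 1 := by
    rw [← map_pow, rotJ_exp_pi_div_pow hq, mk_neg_one]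
  have hgh : (mk (rotI K (.exp (π / p))) * mk (rotJ K (.exp (π / q)))) ^ 2 = 1 := by
    rw [← map_mul, ← map_pow, ← rotPair, rotPair_sq hK, mk_neg_one]
  have := congrArg (triangleGroupLift hg hh hgh) h
  simp only [map_mul, map_pow, map_one, triangleGroupLift_of_true, triangleGroupLift_of_false]
    at this
  rw [← QuotientGroup.eq_one_iff]
  change mk _ = 1
  simpa only [rotPair, Circle.exp_natCast_mul, map_mul, map_pow, mul_assoc] using this

theorem exponent_eq_and_cos_mul_cos_eq_of_word_eq_one {p q α β γ δ : ℕ}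
    (hp : 2 ≤ p) (hq : 2 ≤ q)
    (hα : 1 ≤ α) (hα' : α ≤ p - 1) (hγ : 1 ≤ γ) (hγ' : γ ≤ p - 1)
    (hβ : 1 ≤ β) (hβ' : β ≤ q - 1) (hδ : 1 ≤ δ) (hδ' : δ ≤ q - 1)
    (h : (PresentedGroup.of (rels := triangleRels p q) true) ^ α *
         (PresentedGroup.of (rels := triangleRels p q) false) ^ β *
         (PresentedGroup.of (rels := triangleRels p q) true) ^ γ *
         (PresentedGroup.of (rels := triangleRels p q) false) ^ δ = 1) :
    γ = α ∧ δ = β ∧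
      cos (α * (π / p)) * cos (β * (π / q)) * (sin (π / p) * sin (π / q)) =
        cos (π / p) * cos (π / q) * (sin (α * (π / p)) * sin (β * (π / q))) := by
  have hsa : sin (π / p) ≠ 0 := (sin_pos_of_pos_of_lt_pi (by positivity)
    (div_lt_self pi_pos (by exact_mod_cast (show 1 < p by omega)))).ne'
  have hsb : sin (π / q) ≠ 0 := (sin_pos_of_pos_of_lt_pi (by positivity)
    (div_lt_self pi_pos (by exact_mod_cast (show 1 < q by omega)))).ne'
  obtain ⟨K, hK⟩ : ∃ K, cos (π / p) * cos (π / q) = K * sin (π / p) * sin (π / q) :=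
    ⟨cos (π / p) * cos (π / q) / (sin (π / p) * sin (π / q)), by field_simp⟩
  obtain ⟨hαγ, hβδ, hre⟩ := eq_of_rotPair_mul_rotPair_mem_zpowers
    (natCast_mul_pi_div_mem_Ioo hα hα') (natCast_mul_pi_div_mem_Ioo hβ hβ')
    (natCast_mul_pi_div_mem_Ioo hγ hγ') (natCast_mul_pi_div_mem_Ioo hδ hδ')
    (rotPair_mul_rotPair_mem_zpowers_of_word (by omega) (by omega) hK h)
  rw [natCast_mul_pi_div_inj (by omega)] at hαγ
  rw [natCast_mul_pi_div_inj (by omega)] at hβδ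
  refine ⟨hαγ.symm, hβδ.symm, ?_⟩
  linear_combination
    sin (π / p) * sin (π / q) * hre - sin (α * (π / p)) * sin (β * (π / q)) * hK

end TriangleGroup

end

/-- In the triangle group `H = ⟨x, y | x^p, y^q, (xy)²⟩` (`p, q ≥ 2`), if
`x^α y^β x^γ y^δ = 1` with `α, γ ∈ {1, …, p-1}` and `β, δ ∈ {1, …, q-1}`, then either
`2 ∈ {p, q}`, or `α = β = γ = δ = 1`, or `α = γ = p-1` and `β = δ = q-1`. -/
theorem triangle_group_trivial_word (p q : ℕ) (hp : 2 ≤ p) (hq : 2 ≤ q)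
    (α β γ δ : ℕ)
    (hα : 1 ≤ α) (hα' : α ≤ p - 1) (hγ : 1 ≤ γ) (hγ' : γ ≤ p - 1)
    (hβ : 1 ≤ β) (hβ' : β ≤ q - 1) (hδ : 1 ≤ δ) (hδ' : δ ≤ q - 1)
    (h : (PresentedGroup.of (rels := triangleRels p q) true) ^ α *
         (PresentedGroup.of (rels := triangleRels p q) false) ^ β *
         (PresentedGroup.of (rels := triangleRels p q) true) ^ γ *
         (PresentedGroup.of (rels := triangleRels p q) false) ^ δ = 1) :
    p = 2 ∨ q = 2 ∨ (α = 1 ∧ β = 1 ∧ γ = 1 ∧ δ = 1) ∨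
      (α = p - 1 ∧ γ = p - 1 ∧ β = q - 1 ∧ δ = q - 1) := by
  rcases eq_or_ne p 2 with hp2 | hp2
  · exact .inl hp2
  rcases eq_or_ne q 2 with hq2 | hq2
  · exact .inr (.inl hq2)
  obtain ⟨rfl, rfl, hcot⟩ := TriangleGroup.exponent_eq_and_cos_mul_cos_eq_of_word_eq_one
    hp hq hα hα' hγ hγ' hβ hβ' hδ hδ' h
  right; right
  rcases eq_or_eq_pi_sub_of_cos_mul_cos_eq (pi_div_natCast_mem_Ioo (by omega))
    (pi_div_natCast_mem_Ioo (by omega)) (natCast_mul_pi_div_mem_Icc hα hα')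
    (natCast_mul_pi_div_mem_Icc hβ hβ') hcot with ⟨h₁, h₂⟩ | ⟨h₁, h₂⟩
  · rw [natCast_mul_pi_div_eq_iff (by omega)] at h₁ h₂
    exact .inl ⟨h₁, h₂, h₁, h₂⟩
  · rw [natCast_mul_pi_div_eq_pi_sub_iff (by omega)] at h₁ h₂
    exact .inr ⟨h₁, h₁, h₂, h₂⟩
end

section
/- Let W be a cyclically reduced word of length 2m (m ≥ 1) in the free product G₁ ∗ G₂, and let X be a reduced word of length m such that both X and X⁻¹ appear as cyclic subwords of W. Then X contains a letter of order 2. -/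
/-!
Read `W` cyclically, so that `X` sits at positions `j, …, j + m - 1` and `X⁻¹` at positions
`k, …, k + m - 1`; the letter at `k + m - 1 - i` is then the inverse of the letter at `j + i`.
As `W` is cyclically reduced, the factor of the letter at position `p` depends only on the parity
of `p`, and comparing the case `i = 0` shows that `s = j + k + m - 1` is even. The reflection
`p ↦ s - p` of `ℤ/2m` therefore has two fixed points, `m` apart, one of which lies in the window
of `X`; the letter there is its own inverse.
-/

namespace FreeProductWords

/- Words in the free product `G₁ ∗ G₂` of the two groups `G true` and `G false`:
a word is a list of letters, a letter being (a nontrivial element of) one of the factors. -/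
variable {G : Bool → Type*} [∀ i, Group (G i)]

def Reduced (W : List (Σ i, G i)) : Prop :=
  (∀ x ∈ W, x.2 ≠ 1) ∧ W.Chain' fun u v => u.1 ≠ v.1

def CyclicallyReduced (W : List (Σ i, G i)) : Prop :=
  Reduced W ∧ (W.length ≤ 1 ∨ ∀ x ∈ W.head?, ∀ y ∈ W.getLast?, x.1 ≠ y.1)

def invWord (X : List (Σ i, G i)) : List (Σ i, G i) :=
  (X.map fun x => ⟨x.1, x.2⁻¹⟩).reverse

def IsCyclicSubword (X W : List (Σ i, G i)) : Prop :=
  ∃ j, X <+: W.rotate j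

theorem _root_.Bool.mod_two_eq_of_forall_succ_ne {b : ℕ → Bool} (hb : ∀ p, b (p + 1) ≠ b p)
    {p q : ℕ} (h : b p = b q) : p % 2 = q % 2 := by
  have hper : ∀ p, b p = (b 0 ^^ decide (p % 2 = 1)) := by
    intro p
    induction p with
    | zero => simp
    | succ p ih =>
      rw [Bool.eq_not_of_ne (hb p), ih]
      rcases Nat.mod_two_eq_zero_or_one p with hp | hp <;> simp [hp, Nat.succ_mod_two_eq_one_iff]
  rw [hper p, hper q, Bool.xor_right_inj, decide_eq_decide] at h
  omega

theorem _root_.Nat.exists_lt_sub_add_modEq_add {m j k : ℕ} (hm : 0 < m) (hodd : Odd (j + k + m)) :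
    ∃ i < m, m - 1 - i + k ≡ i + j [MOD 2 * m] := by
  obtain ⟨c, hc⟩ := hodd
  -- `i ≡ c - j [MOD m]`, so that `2 * (i + j) ≡ 2 * c = j + k + m - 1 [MOD 2 * m]`
  refine ⟨(c + (m - j % m)) % m, Nat.mod_lt _ hm, ?_⟩
  set i := (c + (m - j % m)) % m
  have hi : i < m := Nat.mod_lt _ hm
  have hmid : i + j ≡ c [MOD m] := by
    have h1 : i + j ≡ (c + (m - j % m)) + j % m [MOD m] :=
      (Nat.mod_modEq _ m).add (Nat.mod_modEq j m).symm
    have h2 : c + (m - j % m) + j % m = c + m := by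
      have := Nat.mod_lt j hm; omega
    rw [h2] at h1
    exact h1.trans Nat.add_modEq_right
  have hsum : m - 1 - i + k + (i + j) = 2 * c := by omega
  refine Nat.ModEq.add_right_cancel' (i + j) ?_
  rw [hsum, ← two_mul]
  exact (hmid.mul_left' 2).symm

theorem _root_.orderOf_eq_two_of_inv_eq_self {H : Type*} [Group H] {g : H} (h : g⁻¹ = g)
    (h1 : g ≠ 1) : orderOf g = 2 :=
  haveI : Fact (Nat.Prime 2) := ⟨Nat.prime_two⟩
  orderOf_eq_prime (by rw [sq, mul_eq_one_iff_eq_inv, h]) h1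

section Cyclic

variable {α : Type*}

def cyclicGet (W : List α) (hW : 0 < W.length) (p : ℕ) : α :=
  W[p % W.length]'(Nat.mod_lt _ hW)

theorem cyclicGet_congr {W : List α} (hW : 0 < W.length) {p q : ℕ} (h : p ≡ q [MOD W.length]) :
    cyclicGet W hW p = cyclicGet W hW q := by
  simp only [cyclicGet, show p % W.length = q % W.length from h]

theorem getElem_eq_cyclicGet_of_isPrefix_rotate {X W : List α} {j i : ℕ} (h : X <+: W.rotate j)
    (hi : i < X.length) :
    X[i] = cyclicGet W (Nat.zero_lt_of_lt (hi.trans_le (h.length_le.trans (W.length_rotate j).le)))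
      (i + j) := by
  rw [h.getElem hi, List.getElem_rotate, cyclicGet]

end Cyclic

@[simp]
theorem length_invWord (X : List (Σ i, G i)) : (invWord X).length = X.length := by
  simp [invWord]

theorem getElem_invWord_sub_one_sub (X : List (Σ i, G i)) {i : ℕ} (hi : i < X.length) :
    (invWord X)[X.length - 1 - i]'(by simp; omega) = ⟨X[i].1, X[i].2⁻¹⟩ := by
  simp [invWord, show X.length - 1 - (X.length - 1 - i) = i by omega]

theorem CyclicallyReduced.fst_cyclicGet_succ_ne {W : List (Σ i, G i)} (hW : CyclicallyReduced W)
    (hlen : 2 ≤ W.length) (p : ℕ) :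
    (cyclicGet W (by omega) (p + 1)).1 ≠ (cyclicGet W (by omega) p).1 := by
  obtain ⟨⟨-, hchain⟩, hcyc | hcyc⟩ := hW
  · omega
  have hp : p % W.length < W.length := Nat.mod_lt _ (by omega)
  simp only [cyclicGet]
  rcases Nat.lt_or_ge (p % W.length + 1) W.length with hlt | hge
  · have hsucc : (p + 1) % W.length = p % W.length + 1 := by
      rw [Nat.add_mod, Nat.mod_eq_of_lt (a := 1) (by omega), Nat.mod_eq_of_lt hlt]
    simp only [hsucc]
    exact (List.isChain_iff_getElem.mp hchain _ hlt).symm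
  · have hlast : p % W.length = W.length - 1 := by omega
    have hzero : (p + 1) % W.length = 0 := by
      rw [Nat.add_mod, hlast, Nat.mod_eq_of_lt (a := 1) (by omega), Nat.sub_add_cancel (by omega),
        Nat.mod_self]
    simp only [hzero, hlast]
    exact hcyc _ (by simp [List.head?_eq_getElem?]) _ (by simp [List.getLast?_eq_getElem?])

theorem CyclicallyReduced.mod_two_eq_of_fst_cyclicGet_eq {W : List (Σ i, G i)}
    (hW : CyclicallyReduced W) (hlen : 2 ≤ W.length) {p q : ℕ}
    (h : (cyclicGet W (by omega) p).1 = (cyclicGet W (by omega) q).1) : p % 2 = q % 2 :=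
  Bool.mod_two_eq_of_forall_succ_ne (b := fun p => (cyclicGet W _ p).1)
    (hW.fst_cyclicGet_succ_ne hlen) h

theorem exists_orderTwo_letter_of_cyclic_subwords_general (m : ℕ) (hm : 1 ≤ m)
    (W X : List (Σ i, G i))
    (hW : CyclicallyReduced W) (hWlen : W.length = 2 * m)
    (hXlen : X.length = m)
    (h₁ : IsCyclicSubword X W) (h₂ : IsCyclicSubword (invWord X) W) :
    ∃ x ∈ X, orderOf x.2 = 2 := by
  obtain ⟨j, hj⟩ := h₁
  obtain ⟨k, hk⟩ := h₂
  subst hXlen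
  have hlen : 2 ≤ W.length := by omega
  have hpos : 0 < W.length := by omega
  have hXw : ∀ i (hi : i < X.length), X[i] = cyclicGet W hpos (i + j) := fun _ hi =>
    getElem_eq_cyclicGet_of_isPrefix_rotate hj hi
  have hXinv : ∀ i < X.length, cyclicGet W hpos (X.length - 1 - i + k) =
      ⟨(cyclicGet W hpos (i + j)).1, (cyclicGet W hpos (i + j)).2⁻¹⟩ := by
    intro i hi
    rw [← hXw i hi, ← getElem_invWord_sub_one_sub X hi]
    exact (getElem_eq_cyclicGet_of_isPrefix_rotate hk _).symm
  have hodd : Odd (j + k + X.length) := by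
    have hfst : (cyclicGet W hpos (X.length - 1 + k)).1 = (cyclicGet W hpos j).1 := by
      simpa using congrArg Sigma.fst (hXinv 0 hm)
    have := hW.mod_two_eq_of_fst_cyclicGet_eq hlen hfst
    rw [Nat.odd_iff]; omega
  obtain ⟨i, hi, hmod⟩ := Nat.exists_lt_sub_add_modEq_add hm hodd
  have hfixed : cyclicGet W hpos (i + j) =
      ⟨(cyclicGet W hpos (i + j)).1, (cyclicGet W hpos (i + j)).2⁻¹⟩ := by
    rw [← hXinv i hi, cyclicGet_congr _ (hWlen ▸ hmod).symm]
  refine ⟨X[i], List.getElem_mem _, ?_⟩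
  rw [hXw i hi]
  refine orderOf_eq_two_of_inv_eq_self (eq_of_heq (Sigma.ext_iff.mp hfixed).2).symm ?_
  exact hW.1.1 _ (List.getElem_mem _)

/-- Let `W` be a cyclically reduced word of length `2m` (`m ≥ 1`) in the free product
`G₁ ∗ G₂`, and let `X` be a reduced word of length `m` such that both `X` and `X⁻¹` appear
as cyclic subwords of `W`.  Then `X` contains a letter of order 2. -/
theorem exists_orderTwo_letter_of_cyclic_subwords (m : ℕ) (hm : 1 ≤ m)
    (W X : List (Σ i, G i))
    (hW : CyclicallyReduced W) (hWlen : W.length = 2 * m)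
    (hX : Reduced X) (hXlen : X.length = m)
    (h₁ : IsCyclicSubword X W) (h₂ : IsCyclicSubword (invWord X) W) :
    ∃ x ∈ X, orderOf x.2 = 2 :=
  exists_orderTwo_letter_of_cyclic_subwords_general m hm W X hW hWlen hXlen h₁ h₂

end FreeProductWords
end
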